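/- (Countable downward Löwenheim–Skolem for SCL and BndSCL.) Let φ be a sentence of SCL (respectively, of BndSCL) and let 𝔄 be a model with 𝔄 ⊨ φ under unbounded semantics (respectively, 𝔄 ⊨_ω φ under bounded semantics). Then there exists a countable substructure 𝔅 of 𝔄 such that 𝔅 ⊨ φ (respectively, 𝔅 ⊨_ω φ). -/

import Mathlib

/-
Common formalization of the logics SCL (static computation logic, unbounded
game-theoretic semantics) and BndSCL (bounded semantics), following the paper
"First-order logic with self-reference".

* Games are played on arbitrary (possibly infinite) arenas; plays are maximal
  walks; strategies are functions from finite walks (histories) to positions;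
  infinite plays, and finite plays ending at a dead end where `win` holds for
  neither player, are won by nobody.
* The semantic games are formalized with positions carrying the current
  (sub)formula, an environment binding each label symbol to the labelled
  formula it most recently named (this is the standard closure rendering of
  "reference formula of a claim-symbol occurrence"), the current assignment
  and the polarity (+ = true, − = false).  The bounded game additionally
  carries a clock value.
-/

set_option autoImplicit false

universe u

/-! ## Generic two-player games on (possibly infinite) arenas -/

inductive Player : Type
  | eloise : Player
  | abelard : Player
deriving DecidableEq

def Player.opp : Player → Player
  | .eloise => .abelard
  | .abelard => .eloise

/-- A game arena: an ownership function (corresponding to the partition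
`V = V₀ ∪ V₁`), an edge relation, and a predicate telling which player (if
any) wins a play ending at a given dead-end position. -/
structure GameArena (P : Type u) where
  turn : P → Player
  edge : P → P → Prop
  win : P → Player → Prop

namespace GameArena

variable {P : Type u} (A : GameArena P)

def DeadEnd (u : P) : Prop := ∀ x, ¬ A.edge u x

/-- `w` is a finite nonempty walk whose first element is `v`. -/
def IsWalkFrom (v : P) (w : List P) : Prop :=
  w.head? = some v ∧ List.Chain' A.edge w

/-- A finite (maximal) play from `v`: a walk whose last element is a dead end. -/
def IsFinitePlay (v : P) (w : List P) : Prop :=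
  A.IsWalkFrom v w ∧ ∀ u, w.getLast? = some u → A.DeadEnd u

/-- An infinite play from `v`. -/
def IsInfPlay (v : P) (f : ℕ → P) : Prop :=
  f 0 = v ∧ ∀ n, A.edge (f n) (f (n + 1))

/-- A strategy (a function from histories to positions) of player `pl` is
legal if it always prescribes a move along an edge whenever a move exists. -/
def LegalFor (pl : Player) (v : P) (σ : List P → P) : Prop :=
  ∀ w u, A.IsWalkFrom v w → w.getLast? = some u → A.turn u = pl →
    (∃ x, A.edge u x) → A.edge u (σ w)

/-- The strategy `σ` of player `pl` is followed in the finite play `w`. -/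
def FollowsFin (pl : Player) (σ : List P → P) (w : List P) : Prop :=
  ∀ q u x, (q ++ [x]) <+: w → q.getLast? = some u → A.turn u = pl → x = σ q

/-- The strategy `σ` of player `pl` is followed in the infinite play `f`. -/
def FollowsInf (pl : Player) (σ : List P → P) (f : ℕ → P) : Prop :=
  ∀ n, A.turn (f n) = pl →
    f (n + 1) = σ (List.ofFn fun i : Fin (n + 1) => f i)

/-- `σ` is a winning strategy of player `pl` from `v`: it is legal, every
finite maximal play following it ends in a dead end won by `pl`, and no
infinite play follows it (infinite plays are won by neither player). -/
def WinningStrategy (pl : Player) (v : P) (σ : List P → P) : Prop :=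
  A.LegalFor pl v σ ∧
  (∀ w, A.IsFinitePlay v w → A.FollowsFin pl σ w →
      ∃ u, w.getLast? = some u ∧ A.win u pl) ∧
  (∀ f, A.IsInfPlay v f → ¬ A.FollowsInf pl σ f)

def HasWinningStrategy (pl : Player) (v : P) : Prop :=
  ∃ σ : List P → P, A.WinningStrategy pl v σ

end GameArena

/-- A positional strategy: its moves depend only on the current position. -/
def Positional {P : Type u} (σ : List P → P) : Prop :=
  ∀ q q' : List P, q.getLast? = q'.getLast? → σ q = σ q'

/-! ## Syntax of SCL / BndSCL -/

/-- A purely relational vocabulary. -/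
structure Vocab : Type 1 where
  Rel : Type
  arity : Rel → ℕ

/-- Formulas of SCL / BndSCL over the vocabulary `V`.  Variables and label
symbols are natural numbers; `claim L` is the claim symbol `C_L` and
`lab L φ` is the labelled formula `L φ`. -/
inductive SCLFormula (V : Vocab) : Type
  | bot : SCLFormula V
  | eq (x y : ℕ) : SCLFormula V
  | rel (R : V.Rel) (args : Fin (V.arity R) → ℕ) : SCLFormula V
  | claim (L : ℕ) : SCLFormula V
  | not (φ : SCLFormula V) : SCLFormula V
  | and (φ ψ : SCLFormula V) : SCLFormula V
  | or (φ ψ : SCLFormula V) : SCLFormula V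
  | ex (x : ℕ) (φ : SCLFormula V) : SCLFormula V
  | all (x : ℕ) (φ : SCLFormula V) : SCLFormula V
  | lab (L : ℕ) (φ : SCLFormula V) : SCLFormula V

namespace SCLFormula

variable {V : Vocab}

/-- First-order atoms. -/
def IsFOAtom : SCLFormula V → Prop
  | .bot => True
  | .eq _ _ => True
  | .rel _ _ => True
  | _ => False

/-- Purely first-order formulas (no claim symbols, no label symbols). -/
def IsFO : SCLFormula V → Prop
  | .bot => True
  | .eq _ _ => True
  | .rel _ _ => True
  | .claim _ => False
  | .not φ => IsFO φ
  | .and φ ψ => IsFO φ ∧ IsFO ψ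
  | .or φ ψ => IsFO φ ∧ IsFO ψ
  | .ex _ φ => IsFO φ
  | .all _ φ => IsFO φ
  | .lab _ _ => False

/-- Free (individual) variables. -/
def freeVars : SCLFormula V → Finset ℕ
  | .bot => ∅
  | .eq x y => {x, y}
  | .rel _ a => Finset.image a Finset.univ
  | .claim _ => ∅
  | .not φ => freeVars φ
  | .and φ ψ => freeVars φ ∪ freeVars ψ
  | .or φ ψ => freeVars φ ∪ freeVars ψ
  | .ex x φ => freeVars φ \ {x}
  | .all x φ => freeVars φ \ {x}
  | .lab _ φ => freeVars φ

/-- All variables occurring in a formula (free or bound). -/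
def vars : SCLFormula V → Finset ℕ
  | .bot => ∅
  | .eq x y => {x, y}
  | .rel _ a => Finset.image a Finset.univ
  | .claim _ => ∅
  | .not φ => vars φ
  | .and φ ψ => vars φ ∪ vars ψ
  | .or φ ψ => vars φ ∪ vars ψ
  | .ex x φ => insert x (vars φ)
  | .all x φ => insert x (vars φ)
  | .lab _ φ => vars φ

/-- Sentences: formulas with no free variables. -/
def IsSentence (φ : SCLFormula V) : Prop := freeVars φ = ∅

end SCLFormula

/-! ## Structures and first-order (Tarski) satisfaction -/

/-- A (suitable) model for vocabulary `V`: a nonempty domain together with an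
interpretation of all relation symbols. -/
structure Struct (V : Vocab) where
  Dom : Type u
  dom_nonempty : Nonempty Dom
  interp : ∀ R : V.Rel, (Fin (V.arity R) → Dom) → Prop

attribute [instance] Struct.dom_nonempty

/-- Satisfaction of atoms (false on non-atoms). -/
def atomSat {V : Vocab} (M : Struct.{u} V) (s : ℕ → M.Dom) : SCLFormula V → Prop
  | .bot => False
  | .eq x y => s x = s y
  | .rel R a => M.interp R fun i => s (a i)
  | _ => False

/-- Standard (Tarski) first-order satisfaction.  It is only meaningful on
purely first-order formulas; claim symbols are interpreted as `False` and
label symbols are ignored. -/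
def FOSat {V : Vocab} (M : Struct.{u} V) : (ℕ → M.Dom) → SCLFormula V → Prop
  | _, .bot => False
  | s, .eq x y => s x = s y
  | s, .rel R a => M.interp R fun i => s (a i)
  | _, .claim _ => False
  | s, .not φ => ¬ FOSat M s φ
  | s, .and φ ψ => FOSat M s φ ∧ FOSat M s ψ
  | s, .or φ ψ => FOSat M s φ ∨ FOSat M s ψ
  | s, .ex x φ => ∃ a : M.Dom, FOSat M (Function.update s x a) φ
  | s, .all x φ => ∀ a : M.Dom, FOSat M (Function.update s x a) φ
  | s, .lab _ φ => FOSat M s φ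

/-! ## The evaluation games -/

/-- A position of the semantic game: the current formula, the environment
recording for each label symbol `L` the reference formula `L ψ` it currently
names, the current assignment, and the polarity (`true` = `+`). -/
structure SCLPos (V : Vocab) (D : Type u) : Type u where
  form : SCLFormula V
  env : ℕ → Option (SCLFormula V)
  asg : ℕ → D
  pol : Bool

/-- Which player moves at a given position. (At positions with at most one
successor the owner is irrelevant; we let Eloise own them.) -/
def posTurn {V : Vocab} {D : Type u} (p : SCLPos V D) : Player :=
  match p.form, p.pol with
  | .and _ _, true => .abelard
  | .and _ _, false => .eloise
  | .or _ _, true => .eloise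
  | .or _ _, false => .abelard
  | .all _ _, true => .abelard
  | .all _ _, false => .eloise
  | .ex _ _, true => .eloise
  | .ex _ _, false => .abelard
  | _, _ => .eloise

/-- Who wins a play ending at a given position: at an FO-atom position,
Eloise wins iff the atom's truth value agrees with the polarity, and Abelard
wins otherwise; plays ending anywhere else (e.g. at a claim symbol with no
reference formula, or with clock value 0) are won by neither player. -/
def posWin {V : Vocab} (M : Struct.{u} V) (p : SCLPos V M.Dom) : Player → Prop
  | .eloise => p.form.IsFOAtom ∧ (atomSat M p.asg p.form ↔ p.pol = true)
  | .abelard => p.form.IsFOAtom ∧ ¬ (atomSat M p.asg p.form ↔ p.pol = true)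

/-- Moves of the unbounded evaluation game `G_∞`. -/
inductive UStep {V : Vocab} (M : Struct.{u} V) :
    SCLPos V M.Dom → SCLPos V M.Dom → Prop
  | neg (φ : SCLFormula V) (e : ℕ → Option (SCLFormula V)) (s : ℕ → M.Dom) (b : Bool) :
      UStep M ⟨.not φ, e, s, b⟩ ⟨φ, e, s, !b⟩
  | andLeft (φ ψ : SCLFormula V) (e : ℕ → Option (SCLFormula V)) (s : ℕ → M.Dom) (b : Bool) :
      UStep M ⟨.and φ ψ, e, s, b⟩ ⟨φ, e, s, b⟩
  | andRight (φ ψ : SCLFormula V) (e : ℕ → Option (SCLFormula V)) (s : ℕ → M.Dom) (b : Bool) :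
      UStep M ⟨.and φ ψ, e, s, b⟩ ⟨ψ, e, s, b⟩
  | orLeft (φ ψ : SCLFormula V) (e : ℕ → Option (SCLFormula V)) (s : ℕ → M.Dom) (b : Bool) :
      UStep M ⟨.or φ ψ, e, s, b⟩ ⟨φ, e, s, b⟩
  | orRight (φ ψ : SCLFormula V) (e : ℕ → Option (SCLFormula V)) (s : ℕ → M.Dom) (b : Bool) :
      UStep M ⟨.or φ ψ, e, s, b⟩ ⟨ψ, e, s, b⟩
  | exStep (x : ℕ) (φ : SCLFormula V) (e : ℕ → Option (SCLFormula V)) (s : ℕ → M.Dom)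
      (b : Bool) (a : M.Dom) :
      UStep M ⟨.ex x φ, e, s, b⟩ ⟨φ, e, Function.update s x a, b⟩
  | allStep (x : ℕ) (φ : SCLFormula V) (e : ℕ → Option (SCLFormula V)) (s : ℕ → M.Dom)
      (b : Bool) (a : M.Dom) :
      UStep M ⟨.all x φ, e, s, b⟩ ⟨φ, e, Function.update s x a, b⟩
  | labStep (L : ℕ) (φ : SCLFormula V) (e : ℕ → Option (SCLFormula V)) (s : ℕ → M.Dom)
      (b : Bool) :
      UStep M ⟨.lab L φ, e, s, b⟩ ⟨φ, Function.update e L (some (.lab L φ)), s, b⟩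
  | claimStep (L : ℕ) (e : ℕ → Option (SCLFormula V)) (s : ℕ → M.Dom) (b : Bool)
      (χ : SCLFormula V) (h : e L = some χ) :
      UStep M ⟨.claim L, e, s, b⟩ ⟨χ, e, s, b⟩

/-- Moves of the `n`-bounded evaluation game: positions additionally carry a
clock value, which decreases by one exactly at jumps from a claim symbol to
its reference formula; a claim-symbol position with clock value `0` is a dead
end won by neither player. -/
inductive BStep {V : Vocab} (M : Struct.{u} V) :
    SCLPos V M.Dom × ℕ → SCLPos V M.Dom × ℕ → Prop
  | neg (φ : SCLFormula V) (e : ℕ → Option (SCLFormula V)) (s : ℕ → M.Dom) (b : Bool) (n : ℕ) :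
      BStep M (⟨.not φ, e, s, b⟩, n) (⟨φ, e, s, !b⟩, n)
  | andLeft (φ ψ : SCLFormula V) (e : ℕ → Option (SCLFormula V)) (s : ℕ → M.Dom) (b : Bool)
      (n : ℕ) : BStep M (⟨.and φ ψ, e, s, b⟩, n) (⟨φ, e, s, b⟩, n)
  | andRight (φ ψ : SCLFormula V) (e : ℕ → Option (SCLFormula V)) (s : ℕ → M.Dom) (b : Bool)
      (n : ℕ) : BStep M (⟨.and φ ψ, e, s, b⟩, n) (⟨ψ, e, s, b⟩, n)
  | orLeft (φ ψ : SCLFormula V) (e : ℕ → Option (SCLFormula V)) (s : ℕ → M.Dom) (b : Bool)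
      (n : ℕ) : BStep M (⟨.or φ ψ, e, s, b⟩, n) (⟨φ, e, s, b⟩, n)
  | orRight (φ ψ : SCLFormula V) (e : ℕ → Option (SCLFormula V)) (s : ℕ → M.Dom) (b : Bool)
      (n : ℕ) : BStep M (⟨.or φ ψ, e, s, b⟩, n) (⟨ψ, e, s, b⟩, n)
  | exStep (x : ℕ) (φ : SCLFormula V) (e : ℕ → Option (SCLFormula V)) (s : ℕ → M.Dom)
      (b : Bool) (n : ℕ) (a : M.Dom) :
      BStep M (⟨.ex x φ, e, s, b⟩, n) (⟨φ, e, Function.update s x a, b⟩, n)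
  | allStep (x : ℕ) (φ : SCLFormula V) (e : ℕ → Option (SCLFormula V)) (s : ℕ → M.Dom)
      (b : Bool) (n : ℕ) (a : M.Dom) :
      BStep M (⟨.all x φ, e, s, b⟩, n) (⟨φ, e, Function.update s x a, b⟩, n)
  | labStep (L : ℕ) (φ : SCLFormula V) (e : ℕ → Option (SCLFormula V)) (s : ℕ → M.Dom)
      (b : Bool) (n : ℕ) :
      BStep M (⟨.lab L φ, e, s, b⟩, n) (⟨φ, Function.update e L (some (.lab L φ)), s, b⟩, n)
  | claimStep (L : ℕ) (e : ℕ → Option (SCLFormula V)) (s : ℕ → M.Dom) (b : Bool)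
      (χ : SCLFormula V) (n : ℕ) (h : e L = some χ) :
      BStep M (⟨.claim L, e, s, b⟩, n + 1) (⟨χ, e, s, b⟩, n)

/-- The unbounded evaluation game `G_∞(𝔄, ·, ·)` as a game arena. -/
def gameU {V : Vocab} (M : Struct.{u} V) : GameArena (SCLPos V M.Dom) where
  turn := posTurn
  edge := UStep M
  win := posWin M

/-- The bounded evaluation games `G_n(𝔄, ·, ·)` (for all clock values `n`
simultaneously) as a game arena. -/
def gameB {V : Vocab} (M : Struct.{u} V) : GameArena (SCLPos V M.Dom × ℕ) where
  turn p := posTurn p.1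
  edge := BStep M
  win p := posWin M p.1

/-- The initial position of the evaluation game for `φ` under assignment `s`:
empty environment and positive polarity. -/
def initPos {V : Vocab} {D : Type u} (φ : SCLFormula V) (s : ℕ → D) : SCLPos V D :=
  ⟨φ, fun _ => none, s, true⟩

/-- Truth under the unbounded semantics (the logic SCL):
`𝔄,s ⊨ φ` iff Eloise has a winning strategy in `G_∞(𝔄,s,φ)`. -/
def SCLTrue {V : Vocab} (M : Struct.{u} V) (s : ℕ → M.Dom) (φ : SCLFormula V) : Prop :=
  (gameU M).HasWinningStrategy .eloise (initPos φ s)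

/-! ### The bounded game `G_ω` -/

/-- Positions of the game `G_ω`: the initial position (where Abelard picks a
number `n'`), the intermediate positions (where Eloise picks some `n ≥ n'`),
and the positions of the `n`-bounded games. -/
inductive GOPos (V : Vocab) (D : Type u) : Type u
  | start : GOPos V D
  | mid (n' : ℕ) : GOPos V D
  | inner (p : SCLPos V D) (clock : ℕ) : GOPos V D

inductive GOStep {V : Vocab} (M : Struct.{u} V) (φ : SCLFormula V) (s : ℕ → M.Dom) :
    GOPos V M.Dom → GOPos V M.Dom → Prop
  | abelardPick (n' : ℕ) : GOStep M φ s .start (.mid n')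
  | eloisePick (n' n : ℕ) (h : n' ≤ n) : GOStep M φ s (.mid n') (.inner (initPos φ s) n)
  | play (p q : SCLPos V M.Dom) (m k : ℕ) (h : BStep M (p, m) (q, k)) :
      GOStep M φ s (.inner p m) (.inner q k)

def goTurn {V : Vocab} {D : Type u} : GOPos V D → Player
  | .start => .abelard
  | .mid _ => .eloise
  | .inner p _ => posTurn p

def goWin {V : Vocab} (M : Struct.{u} V) : GOPos V M.Dom → Player → Prop
  | .inner p _, pl => posWin M p pl
  | _, _ => False

/-- The bounded evaluation game `G_ω(𝔄,s,φ)`: Abelard picks `n' ∈ ℕ`, then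
Eloise picks `n ≥ n'`, and then `G_n(𝔄,s,φ)` is played. -/
def gameOmega {V : Vocab} (M : Struct.{u} V) (φ : SCLFormula V) (s : ℕ → M.Dom) :
    GameArena (GOPos V M.Dom) where
  turn := goTurn
  edge := GOStep M φ s
  win := goWin M

/-- Truth under the bounded semantics (the logic BndSCL):
`𝔄,s ⊨_ω φ` iff Eloise has a winning strategy in `G_ω(𝔄,s,φ)`. -/
def BndTrue {V : Vocab} (M : Struct.{u} V) (s : ℕ → M.Dom) (φ : SCLFormula V) : Prop :=
  (gameOmega M φ s).HasWinningStrategy .eloise .start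

/-! ## Approximants -/

/-- Auxiliary structural recursion for approximants: `k` tells what to put in
place of a claim symbol.  Label symbols are deleted (while updating the
environment), and polarity is tracked through negations. -/
def approxCore {V : Vocab}
    (k : (ℕ → Option (SCLFormula V)) → Bool → ℕ → SCLFormula V) :
    (ℕ → Option (SCLFormula V)) → Bool → SCLFormula V → SCLFormula V
  | _, _, .bot => .bot
  | _, _, .eq x y => .eq x y
  | _, _, .rel R a => .rel R a
  | e, b, .claim L => k e b L
  | e, b, .not φ => .not (approxCore k e (!b) φ)
  | e, b, .and φ ψ => .and (approxCore k e b φ) (approxCore k e b ψ)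
  | e, b, .or φ ψ => .or (approxCore k e b φ) (approxCore k e b ψ)
  | e, b, .ex x φ => .ex x (approxCore k e b φ)
  | e, b, .all x φ => .all x (approxCore k e b φ)
  | e, b, .lab L φ => approxCore k (Function.update e L (some (.lab L φ))) b φ

/-- `approx n e b φ` unfolds each claim symbol of `φ` (in environment `e`,
under polarity `b`) through `n` jumps to reference formulas; claim symbols
reached with exhausted budget (or with no reference formula) are replaced by
`⊥` at positive occurrences and `⊤` (i.e. `¬⊥`) at negative occurrences, and
all label symbols are deleted. -/
def approx {V : Vocab} : ℕ → (ℕ → Option (SCLFormula V)) → Bool → SCLFormula V → SCLFormula V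
  | 0 => approxCore fun _ b _ => if b then .bot else .not .bot
  | n + 1 => approxCore fun e b L =>
      match e L with
      | some χ => approx n e b χ
      | none => if b then .bot else .not .bot

/-- The `n`-th approximant `Φⁿ_φ` of `φ`: the first-order formula obtained
from the `n`-th unfolding of `φ` by deleting all label symbols and replacing
positive claim occurrences by `⊥` and negative ones by `⊤`. -/
def approximant {V : Vocab} (φ : SCLFormula V) (n : ℕ) : SCLFormula V :=
  approx n (fun _ => none) true φ

/-- The substructure of `M` induced by a nonempty subset `B` of its domain. -/
def substruct {V : Vocab} (M : Struct.{u} V) (B : Set M.Dom) (hB : B.Nonempty) :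
    Struct.{u} V where
  Dom := ↥B
  dom_nonempty := hB.to_subtype
  interp := fun R t => M.interp R fun i => (t i : M.Dom)

/-!
Fix `b₀ ∈ 𝔄` and a winning strategy `σ` of Eloise from the constant assignment `b₀`. The
positions of the game are built from subformulas of `φ`, and their assignments differ from `b₀`
only on the finitely many bound variables of `φ`; so closing `{b₀}` ω times under the values that
`σ` chooses in answer to histories with values in the current set gives a countable set `B`, and
`σ` stays winning when Abelard, too, has to choose values in `B`. That restricted game is
bisimilar to the game on the substructure induced by `B`, started from any assignment into `B`
because `φ` is a sentence, and winning strategies transfer along bisimulations: the copy of `σ`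
plays `σ` in a play of the restricted game that it builds move by move. The bounded game `G_ω`
is handled in the same way, with clock values carried along.
-/

theorem Set.Countable.setOf_forall_mem_list {α : Type*} {S : Set α} (hS : S.Countable) :
    {l : List α | ∀ x ∈ l, x ∈ S}.Countable := by
  have := hS.to_subtype
  refine (Set.countable_range (List.map ((↑) : S → α))).mono fun l hl => ?_
  lift l to List S using hl
  exact ⟨l, rfl⟩

theorem Set.exists_countable_superset_closed {D : Type*} {S : Set D} (hS : S.Countable)
    (F : Set D → Set D) (hF : ∀ C, C.Countable → (F C).Countable)
    (hcont : ∀ E : ℕ → Set D, Monotone E → F (⋃ n, E n) ⊆ ⋃ n, F (E n)) :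
    ∃ B, B.Countable ∧ S ⊆ B ∧ F B ⊆ B := by
  let E : ℕ → Set D := fun n => Nat.rec S (fun _ C => C ∪ F C) n
  have hE : Monotone E := monotone_nat_of_le_succ fun _ => Set.subset_union_left
  have hEc : ∀ n, (E n).Countable := fun n => by
    induction n with
    | zero => exact hS
    | succ n ih => exact ih.union (hF _ ih)
  refine ⟨⋃ n, E n, Set.countable_iUnion hEc, Set.subset_iUnion E 0, (hcont E hE).trans ?_⟩
  exact Set.iUnion_subset fun n => (Set.subset_union_right : F (E n) ⊆ E (n + 1)).trans
    (Set.subset_iUnion E (n + 1))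

theorem Finset.subset_insert_sdiff_singleton {α : Type*} [DecidableEq α] (s : Finset α) (a : α) :
    s ⊆ insert a (s \ {a}) :=
  Finset.subset_insert_iff.2 (Finset.sdiff_singleton_eq_erase a s).ge

theorem Set.EqOn.update {α β : Type*} [DecidableEq α] {f g : α → β} {s t : Set α}
    (h : Set.EqOn f g s) {a : α} (hts : t ⊆ insert a s) (b : β) :
    Set.EqOn (Function.update f a b) (Function.update g a b) t := by
  intro x hx
  rcases eq_or_ne x a with rfl | hxa
  · simp
  · simpa [Function.update_of_ne hxa] using h ((hts hx).resolve_left hxa)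

namespace GameArena

variable {P : Type u} {A : GameArena P}

theorem IsWalkFrom.forall_mem {v : P} {w : List P} (hw : A.IsWalkFrom v w) {Q : P → Prop}
    (hv : Q v) (hQ : ∀ ⦃p q⦄, A.edge p q → Q p → Q q) : ∀ p ∈ w, Q p :=
  hw.2.induction Q w hQ fun hne => by
    obtain rfl := Option.some_inj.1 ((List.head?_eq_some_head hne).symm.trans hw.1)
    exact hv

theorem isWalkFrom_singleton {v x : P} : A.IsWalkFrom v [x] ↔ x = v :=
  ⟨fun h => by simpa using h.1, fun h => ⟨by simp [h], List.isChain_singleton x⟩⟩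

theorem isWalkFrom_append_singleton {v u x : P} {w : List P} (hu : w.getLast? = some u) :
    A.IsWalkFrom v (w ++ [x]) ↔ A.IsWalkFrom v w ∧ A.edge u x := by
  have hw : w ≠ [] := by rintro rfl; simp at hu
  change (w ++ [x]).head? = some v ∧ (w ++ [x]).IsChain A.edge ↔
    (w.head? = some v ∧ w.IsChain A.edge) ∧ A.edge u x
  simp [List.isChain_append, List.head?_append_of_ne_nil _ hw, hu, and_assoc]

theorem followsFin_singleton {pl : Player} {σ : List P → P} {x : P} :
    A.FollowsFin pl σ [x] := by
  intro q u y hq hu _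
  have hlen := hq.length_le
  simp only [List.length_append, List.length_singleton] at hlen
  simp [List.eq_nil_of_length_eq_zero (by omega : q.length = 0)] at hu

theorem followsFin_append_singleton {pl : Player} {σ : List P → P} {u x : P} {w : List P}
    (hu : w.getLast? = some u) :
    A.FollowsFin pl σ (w ++ [x]) ↔ A.FollowsFin pl σ w ∧ (A.turn u = pl → x = σ w) := by
  refine ⟨fun h => ⟨fun q u y hq => h q u y (hq.trans (List.prefix_append _ _)),
    h w u x (List.prefix_refl _) hu⟩, fun ⟨h, hx⟩ q u' y hq hu' hturn => ?_⟩
  rcases List.prefix_concat_iff.1 hq with heq | hq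
  · obtain ⟨rfl, hy⟩ := List.append_inj' heq rfl
    obtain rfl : u' = u := Option.some_inj.1 (hu'.symm.trans hu)
    simpa using (List.singleton_inj.1 hy).trans (hx hturn)
  · exact h q u' y hq hu' hturn

def history (f : ℕ → P) (n : ℕ) : List P := List.ofFn fun i : Fin (n + 1) => f i

theorem history_zero (f : ℕ → P) : history f 0 = [f 0] := rfl

theorem history_succ (f : ℕ → P) (n : ℕ) : history f (n + 1) = history f n ++ [f (n + 1)] := by
  rw [history, List.ofFn_succ', List.concat_eq_append]
  rfl

theorem getLast?_history (f : ℕ → P) (n : ℕ) : (history f n).getLast? = some (f n) := by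
  cases n with
  | zero => rfl
  | succ n => rw [history_succ, List.getLast?_concat]

theorem eq_history_of_append_singleton {L : ℕ → List P} (d : P) (h0 : ∃ a, L 0 = [a])
    (hsucc : ∀ n, ∃ a, L (n + 1) = L n ++ [a]) :
    ∀ n, L n = history (fun k => (L k).getLastD d) n := by
  intro n
  induction n with
  | zero => obtain ⟨a, ha⟩ := h0; simp [ha, history_zero]
  | succ n ih =>
    obtain ⟨a, ha⟩ := hsucc n
    rw [history_succ, ← ih, ha]
    simp

theorem isInfPlay_and_followsInf_iff {pl : Player} {σ : List P → P} {v : P} {f : ℕ → P} :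
    A.IsInfPlay v f ∧ A.FollowsInf pl σ f ↔
      ∀ n, A.IsWalkFrom v (history f n) ∧ A.FollowsFin pl σ (history f n) := by
  constructor
  · rintro ⟨⟨h0, hedge⟩, hfol⟩ n
    induction n with
    | zero => exact ⟨isWalkFrom_singleton.2 h0, followsFin_singleton⟩
    | succ n ih =>
      rw [history_succ, isWalkFrom_append_singleton (getLast?_history f n),
        followsFin_append_singleton (getLast?_history f n)]
      exact ⟨⟨ih.1, hedge n⟩, ih.2, hfol n⟩
  · intro h
    have hsucc n := h (n + 1)
    simp only [history_succ, isWalkFrom_append_singleton (getLast?_history f _),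
      followsFin_append_singleton (getLast?_history f _)] at hsucc
    exact ⟨⟨isWalkFrom_singleton.1 (h 0).1, fun n => (hsucc n).1.2⟩, fun n => (hsucc n).2.2⟩

def restrict (A : GameArena P) (Inv : P → Prop) : GameArena P where
  turn := A.turn
  edge p q := A.edge p q ∧ Inv q
  win := A.win

theorem IsWalkFrom.of_restrict {Inv : P → Prop} {v : P} {w : List P}
    (hw : (A.restrict Inv).IsWalkFrom v w) : A.IsWalkFrom v w :=
  ⟨hw.1, hw.2.imp fun _ _ h => h.1⟩

theorem WinningStrategy.restrict {Inv : P → Prop} {pl : Player} {v : P} {σ : List P → P}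
    (hσ : A.WinningStrategy pl v σ) (hv : Inv v)
    (hmove : ∀ p, Inv p → (∃ q, A.edge p q) → ∃ q, A.edge p q ∧ Inv q)
    (hσInv : ∀ w u, A.IsWalkFrom v w → (∀ p ∈ w, Inv p) → w.getLast? = some u →
      A.edge u (σ w) → Inv (σ w)) :
    (A.restrict Inv).WinningStrategy pl v σ := by
  obtain ⟨hlegal, hfin, hinf⟩ := hσ
  have hInv {w} (hw : (A.restrict Inv).IsWalkFrom v w) : ∀ p ∈ w, Inv p :=
    hw.forall_mem hv fun _ _ h _ => h.2
  refine ⟨fun w u hw hu hturn ⟨q, hq⟩ => ?_, fun w ⟨hw, hdead⟩ hfol => ?_,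
    fun f hf => hinf f ⟨hf.1, fun n => (hf.2 n).1⟩⟩
  · have hσw := hlegal w u hw.of_restrict hu hturn ⟨q, hq.1⟩
    exact ⟨hσw, hσInv w u hw.of_restrict (hInv hw) hu hσw⟩
  · refine hfin w ⟨hw.of_restrict, fun u hu q hq => ?_⟩ hfol
    obtain ⟨q', hq'⟩ := hmove u (hInv hw u (List.mem_of_getLast? hu)) ⟨q, hq⟩
    exact hdead u hu q' hq'

theorem exists_countable_closed_under_strategy {D : Type*} (σ : List P → P) (Reach : P → Prop)
    (val : P → Set D) (hfin : ∀ p, (val p).Finite)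
    (hcount : ∀ C : Set D, C.Countable → {p | Reach p ∧ val p ⊆ C}.Countable) (b₀ : D) :
    ∃ B : Set D, B.Countable ∧ b₀ ∈ B ∧
      ∀ w : List P, (∀ p ∈ w, Reach p ∧ val p ⊆ B) → val (σ w) ⊆ B := by
  let F : Set D → Set D := fun C => ⋃ w ∈ {w : List P | ∀ p ∈ w, Reach p ∧ val p ⊆ C}, val (σ w)
  have hF : ∀ C, C.Countable → (F C).Countable := fun C hC =>
    (hcount C hC).setOf_forall_mem_list.biUnion fun w _ => (hfin (σ w)).countable
  have hcont : ∀ E : ℕ → Set D, Monotone E → F (⋃ n, E n) ⊆ ⋃ n, F (E n) := by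
    intro E hE
    refine Set.iUnion₂_subset fun w hw => ?_
    have hwfin : (⋃ p ∈ {p | p ∈ w}, val p).Finite := w.finite_toSet.biUnion fun p _ => hfin p
    obtain ⟨n, hn⟩ := hE.directed_le.exists_mem_subset_of_finset_subset_biUnion
      (s := hwfin.toFinset) (by simpa using fun p hp => (hw p hp).2)
    refine Set.subset_iUnion_of_subset n (Set.subset_biUnion_of_mem (u := fun w => val (σ w)) ?_)
    exact fun p hp => ⟨(hw p hp).1, fun x hx => hn (by simpa using ⟨p, hp, hx⟩)⟩
  obtain ⟨B, hB, hb₀, hFB⟩ :=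
    Set.exists_countable_superset_closed (Set.countable_singleton b₀) F hF hcont
  exact ⟨B, hB, hb₀ rfl, fun w hw =>
    (Set.subset_biUnion_of_mem (u := fun w => val (σ w))
      (s := {w : List P | ∀ p ∈ w, Reach p ∧ val p ⊆ B}) hw).trans hFB⟩

theorem WinningStrategy.exists_countable_restrict {D : Type*} {pl : Player} {v : P}
    {σ : List P → P} (hσ : A.WinningStrategy pl v σ) (Reach : P → Prop) (val : P → Set D)
    (b₀ : D) (hv : Reach v) (hv_val : val v ⊆ {b₀})
    (hReach : ∀ ⦃p q⦄, A.edge p q → Reach p → Reach q) (hfin : ∀ p, (val p).Finite)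
    (hcount : ∀ C : Set D, C.Countable → {p | Reach p ∧ val p ⊆ C}.Countable)
    (hmove : ∀ B : Set D, b₀ ∈ B → ∀ p, Reach p → val p ⊆ B → (∃ q, A.edge p q) →
      ∃ q, A.edge p q ∧ val q ⊆ B) :
    ∃ B : Set D, B.Countable ∧ b₀ ∈ B ∧
      (A.restrict fun p => Reach p ∧ val p ⊆ B).WinningStrategy pl v σ := by
  obtain ⟨B, hB, hb₀, hclosed⟩ := exists_countable_closed_under_strategy σ Reach val hfin hcount b₀
  refine ⟨B, hB, hb₀, hσ.restrict ⟨hv, hv_val.trans (Set.singleton_subset_iff.2 hb₀)⟩ ?_ ?_⟩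
  · rintro p ⟨hp, hpB⟩ hp'
    obtain ⟨q, hq, hqB⟩ := hmove B hb₀ p hp hpB hp'
    exact ⟨q, hq, hReach hq hp, hqB⟩
  · intro w u _ hw hu hσw
    exact ⟨hReach hσw (hw u (List.mem_of_getLast? hu)).1, hclosed w hw⟩

variable {P' : Type*}

structure IsBisimulation (A' : GameArena P') (A : GameArena P) (pl : Player)
    (R : P' → P → Prop) : Prop where
  turn_eq : ∀ {p' p}, R p' p → A'.turn p' = A.turn p
  win : ∀ {p' p}, R p' p → A.win p pl → A'.win p' pl
  forth : ∀ {p' p q'}, R p' p → A'.edge p' q' → ∃ q, A.edge p q ∧ R q' q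
  back : ∀ {p' p q}, R p' p → A.edge p q → ∃ q', A'.edge p' q' ∧ R q' q

namespace IsBisimulation

variable (A : GameArena P) (A' : GameArena P') (pl : Player) (R : P' → P → Prop)
  (v : P) (v' : P') (σ : List P → P)

open Classical in
noncomputable def answer (p : P) (x' : P') : P :=
  if h : ∃ q, A.edge p q ∧ R x' q then h.choose else p

open Classical in
/-- The fallback to an arbitrary move keeps the transferred strategy legal on histories that
do not follow it. -/
noncomputable def pullback (p' : P') (q : P) : P' :=
  if h : ∃ q', A'.edge p' q' ∧ R q' q then h.choose
  else if h' : ∃ q', A'.edge p' q' then h'.choose else p'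

noncomputable def liftStep (h : List P) (x' : P') : P :=
  if A.turn (h.getLastD v) = pl then σ h else answer A R (h.getLastD v) x'

noncomputable def liftHistory : List P' → List P
  | [] => []
  | _ :: w' => w'.foldl (fun h x' => h ++ [liftStep A pl R v σ h x']) [v]

noncomputable def transferStrategy (w' : List P') : P' :=
  pullback A' R (w'.getLastD v') (σ (liftHistory A pl R v σ w'))

variable {A A' pl R v v' σ}

theorem answer_spec {p : P} {x' : P'} (h : ∃ q, A.edge p q ∧ R x' q) :
    A.edge p (answer A R p x') ∧ R x' (answer A R p x') := by
  rw [answer, dif_pos h]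
  exact h.choose_spec

theorem pullback_spec {p' : P'} {q : P} (h : ∃ q', A'.edge p' q' ∧ R q' q) :
    A'.edge p' (pullback A' R p' q) ∧ R (pullback A' R p' q) q := by
  rw [pullback, dif_pos h]
  exact h.choose_spec

theorem pullback_edge {p' : P'} {q : P} (h : ∃ q', A'.edge p' q') :
    A'.edge p' (pullback A' R p' q) := by
  by_cases hq : ∃ q', A'.edge p' q' ∧ R q' q
  · exact (pullback_spec hq).1
  · rw [pullback, dif_neg hq, dif_pos h]
    exact h.choose_spec

theorem liftHistory_append_singleton {w' : List P'} (hw' : w' ≠ []) (x' : P') :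
    liftHistory A pl R v σ (w' ++ [x']) =
      liftHistory A pl R v σ w' ++ [liftStep A pl R v σ (liftHistory A pl R v σ w') x'] := by
  obtain ⟨a, w', rfl⟩ := List.exists_cons_of_ne_nil hw'
  simp [liftHistory]

theorem liftStep_spec (hR : IsBisimulation A' A pl R) (hσ : A.LegalFor pl v σ) {h : List P}
    {u : P} {u' x' : P'} (hh : A.IsWalkFrom v h) (hu : h.getLast? = some u) (hRu : R u' u)
    (hx' : A'.edge u' x') (hσx' : A.turn u = pl → x' = pullback A' R u' (σ h)) :
    A.edge u (liftStep A pl R v σ h x') ∧ R x' (liftStep A pl R v σ h x') ∧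
      (A.turn u = pl → liftStep A pl R v σ h x' = σ h) := by
  have hlast : h.getLastD v = u := by simp [List.getLastD_eq_getLast?, hu]
  by_cases hturn : A.turn u = pl
  · have hσh : A.edge u (σ h) := by
      obtain ⟨q, hq, -⟩ := hR.forth hRu hx'
      exact hσ h u hh hu hturn ⟨q, hq⟩
    rw [liftStep, hlast, if_pos hturn, hσx' hturn]
    exact ⟨hσh, (pullback_spec (hR.back hRu hσh)).2, fun _ => rfl⟩
  · rw [liftStep, hlast, if_neg hturn]
    exact ⟨(answer_spec (hR.forth hRu hx')).1, (answer_spec (hR.forth hRu hx')).2, hturn.elim⟩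

theorem liftHistory_spec (hR : IsBisimulation A' A pl R) (hv : R v' v) (hσ : A.LegalFor pl v σ)
    {w' : List P'} (hw' : A'.IsWalkFrom v' w')
    (hfol : A'.FollowsFin pl (transferStrategy A A' pl R v v' σ) w') :
    A.IsWalkFrom v (liftHistory A pl R v σ w') ∧ A.FollowsFin pl σ (liftHistory A pl R v σ w') ∧
      ∃ u' u, w'.getLast? = some u' ∧ (liftHistory A pl R v σ w').getLast? = some u ∧ R u' u := by
  induction w' using List.reverseRecOn with
  | nil => simp [IsWalkFrom] at hw'
  | append_singleton w' x' ih =>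
    rcases eq_or_ne w' [] with rfl | hne
    · obtain rfl := isWalkFrom_singleton.1 hw'
      exact ⟨isWalkFrom_singleton.2 rfl, followsFin_singleton, _, _, rfl, rfl, hv⟩
    obtain ⟨u', hu'⟩ := List.getLast?_isSome.2 hne |> Option.isSome_iff_exists.1
    rw [isWalkFrom_append_singleton hu'] at hw'
    rw [followsFin_append_singleton hu'] at hfol
    obtain ⟨hh, hhfol, u'', u, hu'', hu, hRu⟩ := ih hw'.1 hfol.1
    have : u'' = u' := Option.some_inj.1 (hu''.symm.trans hu')
    subst u''
    have hσx' : A.turn u = pl → x' = pullback A' R u' (σ (liftHistory A pl R v σ w')) := by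
      intro hturn
      rw [hfol.2 ((hR.turn_eq hRu).trans hturn), transferStrategy]
      simp [List.getLastD_eq_getLast?, hu']
    obtain ⟨hedge, hR', hσ'⟩ := liftStep_spec hR hσ hh hu hRu hw'.2 hσx'
    rw [liftHistory_append_singleton hne, isWalkFrom_append_singleton hu,
      followsFin_append_singleton hu]
    exact ⟨⟨hh, hedge⟩, ⟨hhfol, fun hturn => hσ' hturn⟩, x', _, List.getLast?_concat,
      List.getLast?_concat, hR'⟩

theorem hasWinningStrategy (hR : IsBisimulation A' A pl R) (hv : R v' v)
    (h : A.HasWinningStrategy pl v) : A'.HasWinningStrategy pl v' := by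
  obtain ⟨σ, hlegal, hfin, hinf⟩ := h
  refine ⟨transferStrategy A A' pl R v v' σ, fun w' u' _ hu' _ hmove => ?_, fun w' hw' hfol => ?_,
    fun f' hf' hfol => ?_⟩
  · rw [transferStrategy, List.getLastD_eq_getLast?, hu']
    exact pullback_edge hmove
  · obtain ⟨hw, hwfol, u', u, hu', hu, hRu⟩ := liftHistory_spec hR hv hlegal hw'.1 hfol
    have hdead : A.DeadEnd u := fun q hq => by
      obtain ⟨q', hq', -⟩ := hR.back hRu hq
      exact hw'.2 u' hu' q' hq'
    obtain ⟨z, hz, hwin⟩ := hfin _ ⟨hw, fun z hz => (Option.some_inj.1 (hz.symm.trans hu)) ▸ hdead⟩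
      hwfol
    obtain rfl := Option.some_inj.1 (hz.symm.trans hu)
    exact ⟨u', hu', hR.win hRu hwin⟩
  · -- the lifts of the finite stages of `f'` are the finite stages of an infinite play of `A`
    have hstages := isInfPlay_and_followsInf_iff.1 ⟨hf', hfol⟩
    have hshadow := eq_history_of_append_singleton (L := fun n => liftHistory A pl R v σ
      (history f' n)) v ⟨v, rfl⟩ fun n => ⟨_, by
        rw [history_succ]
        exact liftHistory_append_singleton (by simp [history]) _⟩
    obtain ⟨hf, hffol⟩ := isInfPlay_and_followsInf_iff.2 fun n => by
      have hplay := liftHistory_spec hR hv hlegal (hstages n).1 (hstages n).2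
      rw [hshadow n] at hplay
      exact ⟨hplay.1, hplay.2.1⟩
    exact hinf _ hf hffol

end IsBisimulation

end GameArena

namespace SCLFormula

variable {V : Vocab}

def subformulas : SCLFormula V → List (SCLFormula V)
  | .not φ => .not φ :: φ.subformulas
  | .and φ ψ => .and φ ψ :: (φ.subformulas ++ ψ.subformulas)
  | .or φ ψ => .or φ ψ :: (φ.subformulas ++ ψ.subformulas)
  | .ex x φ => .ex x φ :: φ.subformulas
  | .all x φ => .all x φ :: φ.subformulas
  | .lab L φ => .lab L φ :: φ.subformulas
  | φ => [φ]

theorem mem_subformulas_self (φ : SCLFormula V) : φ ∈ φ.subformulas := by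
  cases φ <;> simp [subformulas]

theorem mem_subformulas_trans {φ χ ψ : SCLFormula V} (hψ : ψ ∈ χ.subformulas)
    (hχ : χ ∈ φ.subformulas) : ψ ∈ φ.subformulas := by
  induction φ <;> aesop (add norm simp subformulas)

def boundVars (φ : SCLFormula V) : List ℕ :=
  φ.subformulas.filterMap fun
    | .ex x _ => some x
    | .all x _ => some x
    | _ => none

def labels (φ : SCLFormula V) : List ℕ :=
  φ.subformulas.filterMap fun
    | .lab L _ => some L
    | _ => none

/-- Claim moves evaluate the formulas of the environment under the current assignment, so their
free variables matter as well. -/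
def relevantVars (φ : SCLFormula V) (e : ℕ → Option (SCLFormula V)) : Set ℕ :=
  {x | x ∈ φ.freeVars ∨ ∃ L χ, e L = some χ ∧ x ∈ χ.freeVars}

theorem relevantVars_subset {φ ψ : SCLFormula V} {e : ℕ → Option (SCLFormula V)}
    (h : ψ.freeVars ⊆ φ.freeVars) : ψ.relevantVars e ⊆ φ.relevantVars e :=
  fun _ => Or.imp_left fun hx => h hx

theorem relevantVars_subset_insert {φ ψ : SCLFormula V} {e : ℕ → Option (SCLFormula V)} {x : ℕ}
    (h : ψ.freeVars ⊆ insert x φ.freeVars) : ψ.relevantVars e ⊆ insert x (φ.relevantVars e) := by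
  rintro y (hy | hy)
  · rcases Finset.mem_insert.1 (h hy) with rfl | hy
    exacts [Set.mem_insert _ _, Or.inr (Or.inl hy)]
  · exact Or.inr (Or.inr hy)

theorem relevantVars_lab {ψ : SCLFormula V} {e : ℕ → Option (SCLFormula V)} {L : ℕ} :
    ψ.relevantVars (Function.update e L (some (.lab L ψ))) ⊆ (lab L ψ).relevantVars e := by
  rintro y (hy | ⟨L', χ, hχ, hy⟩)
  · exact Or.inl hy
  · rcases eq_or_ne L' L with rfl | hL
    · obtain rfl : lab L' ψ = χ := by simpa using hχ
      exact Or.inl hy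
    · exact Or.inr ⟨L', χ, by rwa [Function.update_of_ne hL] at hχ, hy⟩

theorem relevantVars_claim {χ : SCLFormula V} {e : ℕ → Option (SCLFormula V)} {L : ℕ}
    (h : e L = some χ) : χ.relevantVars e ⊆ (claim L).relevantVars e :=
  fun _ hy => Or.inr <| hy.elim (fun hy => ⟨L, χ, h, hy⟩) id

end SCLFormula

theorem BStep.uStep {V : Vocab} {M : Struct.{u} V} {p q : SCLPos V M.Dom} {m k : ℕ}
    (h : BStep M (p, m) (q, k)) : UStep M p q := by
  cases h
  case claimStep h => exact .claimStep _ _ _ _ _ h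
  all_goals constructor

theorem UStep.exists_bStep {V : Vocab} {M : Struct.{u} V} {p q : SCLPos V M.Dom}
    (h : UStep M p q) : ∃ m k, BStep M (p, m) (q, k) := by
  cases h
  case claimStep h => exact ⟨1, 0, .claimStep _ _ _ _ _ 0 h⟩
  all_goals exact ⟨0, 0, by constructor⟩

namespace SCLPos

open SCLFormula

variable {V : Vocab} {D : Type u}

/-- An invariant of the positions of the evaluation game of `φ` started under the constant
assignment `b₀`. -/
structure Confined (φ : SCLFormula V) (b₀ : D) (p : SCLPos V D) : Prop where
  form_mem : p.form ∈ φ.subformulas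
  env_mem : ∀ L χ, p.env L = some χ → χ ∈ φ.subformulas
  env_eq_none : ∀ L ∉ φ.labels, p.env L = none
  asg_eq : ∀ x ∉ φ.boundVars, p.asg x = b₀

def boundValues (φ : SCLFormula V) (p : SCLPos V D) : Set D := p.asg '' {x | x ∈ φ.boundVars}

theorem boundValues_finite (φ : SCLFormula V) (p : SCLPos V D) : (p.boundValues φ).Finite :=
  φ.boundVars.finite_toSet.image _

theorem boundValues_initPos (φ : SCLFormula V) (b₀ : D) :
    (initPos φ fun _ => b₀).boundValues φ ⊆ {b₀} := by
  rintro _ ⟨x, -, rfl⟩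
  rfl

theorem confined_initPos (φ : SCLFormula V) (b₀ : D) : (initPos φ fun _ => b₀).Confined φ b₀ :=
  ⟨mem_subformulas_self φ, by simp [initPos], by simp [initPos], fun _ _ => rfl⟩

theorem Confined.asg_mem {φ : SCLFormula V} {b₀ : D} {p : SCLPos V D} {B : Set D}
    (hp : p.Confined φ b₀) (hb₀ : b₀ ∈ B) (hpB : p.boundValues φ ⊆ B) (x : ℕ) : p.asg x ∈ B := by
  by_cases hx : x ∈ φ.boundVars
  · exact hpB ⟨x, hx, rfl⟩
  · rw [hp.asg_eq x hx]
    exact hb₀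

theorem boundValues_subset {φ : SCLFormula V} {p : SCLPos V D} {B : Set D}
    (h : ∀ x, p.asg x ∈ B) : p.boundValues φ ⊆ B := by
  rintro _ ⟨x, -, rfl⟩
  exact h x

theorem Confined.uStep {M : Struct.{u} V} {φ : SCLFormula V} {b₀ : M.Dom} {p q : SCLPos V M.Dom}
    (hp : p.Confined φ b₀) (h : UStep M p q) : q.Confined φ b₀ := by
  obtain ⟨hform, henv, hnone, hasg⟩ := hp
  have hchild {ψ} (hψ : ψ ∈ p.form.subformulas) : ψ ∈ φ.subformulas :=
    mem_subformulas_trans hψ hform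
  have hbound {x : ℕ} {a : M.Dom} (hx : x ∈ φ.boundVars) :
      ∀ y ∉ φ.boundVars, Function.update p.asg x a y = b₀ := fun y hy => by
    rw [Function.update_of_ne (ne_of_mem_of_not_mem hx hy).symm, hasg y hy]
  cases h with
  | exStep | allStep =>
    exact ⟨hchild (by simp [subformulas, mem_subformulas_self]), henv, hnone,
      hbound (List.mem_filterMap.2 ⟨_, hform, rfl⟩)⟩
  | labStep L ψ e s b =>
    refine ⟨hchild (by simp [subformulas, mem_subformulas_self]), fun L' χ hχ => ?_,
      fun L' hL' => ?_, hasg⟩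
    · rcases eq_or_ne L' L with rfl | hL
      · obtain rfl : lab L' ψ = χ := by simpa using hχ
        exact hform
      · exact henv L' χ (by simpa [Function.update_of_ne hL] using hχ)
    · have hL : L' ≠ L := by
        rintro rfl
        exact hL' (List.mem_filterMap.2 ⟨_, hform, rfl⟩)
      simpa [Function.update_of_ne hL] using hnone L' hL'
  | claimStep L e s b χ hχ => exact ⟨henv L χ hχ, henv, hnone, hasg⟩
  | _ => exact ⟨hchild (by simp [subformulas, mem_subformulas_self]), henv, hnone, hasg⟩

theorem Confined.bStep {M : Struct.{u} V} {φ : SCLFormula V} {b₀ : M.Dom} {p q : SCLPos V M.Dom}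
    {m k : ℕ} (hp : p.Confined φ b₀) (h : BStep M (p, m) (q, k)) : q.Confined φ b₀ :=
  hp.uStep h.uStep

/-- A confined position is determined by its formula, its environment on the labels of `φ`, its
assignment on the bound variables of `φ` and its polarity. -/
theorem countable_setOf_confined {φ : SCLFormula V} {b₀ : D} {C : Set D} (hC : C.Countable) :
    {p : SCLPos V D | p.Confined φ b₀ ∧ p.boundValues φ ⊆ C}.Countable := by
  let S : Set (SCLFormula V) := {ψ | ψ ∈ φ.subformulas}
  have hS : S.Countable := φ.subformulas.finite_toSet.countable
  refine Set.MapsTo.countable_of_injOn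
    (f := fun p => (p.form, φ.labels.map p.env, φ.boundVars.map p.asg, p.pol))
    (t := S ×ˢ {l | ∀ o ∈ l, o ∈ insert none (some '' S)} ×ˢ {l | ∀ a ∈ l, a ∈ C} ×ˢ Set.univ)
    ?_ ?_ (hS.prod (((hS.image _).insert _).setOf_forall_mem_list.prod
      (hC.setOf_forall_mem_list.prod Set.countable_univ)))
  · rintro p ⟨hp, hpC⟩
    refine ⟨hp.form_mem, ?_, ?_, trivial⟩
    · intro o ho
      obtain ⟨L, -, rfl⟩ := List.mem_map.1 ho
      cases h : p.env L with
      | none => exact Set.mem_insert _ _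
      | some χ => exact Or.inr ⟨χ, hp.env_mem L χ h, rfl⟩
    · intro a ha
      obtain ⟨x, hx, rfl⟩ := List.mem_map.1 ha
      exact hpC ⟨x, hx, rfl⟩
  · rintro ⟨f₁, e₁, s₁, b₁⟩ ⟨hp₁, -⟩ ⟨f₂, e₂, s₂, b₂⟩ ⟨hp₂, -⟩ h
    simp only [Prod.mk.injEq, List.map_inj_left] at h
    obtain ⟨rfl, he, hs, rfl⟩ := h
    congr 1
    · funext L
      by_cases hL : L ∈ φ.labels
      exacts [he L hL, (hp₁.env_eq_none L hL).trans (hp₂.env_eq_none L hL).symm]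
    · funext x
      by_cases hx : x ∈ φ.boundVars
      exacts [hs x hx, (hp₁.asg_eq x hx).trans (hp₂.asg_eq x hx).symm]

end SCLPos

section Substructure

open SCLFormula

variable {V : Vocab} {M : Struct.{u} V} {B : Set M.Dom} {hB : B.Nonempty}

theorem atomSat_substruct_iff {t : ℕ → B} {s : ℕ → M.Dom} {α : SCLFormula V}
    (h : Set.EqOn (Subtype.val ∘ t) s α.freeVars) :
    atomSat (substruct M B hB) t α ↔ atomSat M s α := by
  cases α with
  | eq x y =>
    simp only [atomSat, freeVars, Finset.coe_insert, Finset.coe_singleton] at h ⊢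
    rw [← h (Set.mem_insert x _), ← h (Set.mem_insert_of_mem x rfl), Function.comp_apply,
      Function.comp_apply]
    exact Subtype.ext_iff
  | rel R a =>
    have ha : (fun i => (t (a i) : M.Dom)) = fun i => s (a i) :=
      funext fun i => h (by simp [freeVars])
    exact iff_of_eq (congrArg (M.interp R) ha)
  | _ => exact Iff.rfl

structure Mirrors (B : Set M.Dom) (p' : SCLPos V B) (q : SCLPos V M.Dom) : Prop where
  form_eq : p'.form = q.form
  env_eq : p'.env = q.env
  pol_eq : p'.pol = q.pol
  asg_mem : ∀ x, q.asg x ∈ B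
  asg_eqOn : Set.EqOn (Subtype.val ∘ p'.asg) q.asg (q.form.relevantVars q.env)

namespace Mirrors

theorem posTurn_eq {p' : SCLPos V B} {q : SCLPos V M.Dom} (h : Mirrors B p' q) :
    posTurn p' = posTurn q := by
  unfold posTurn
  rw [h.form_eq, h.pol_eq]

theorem posWin_iff {p' : SCLPos V B} {q : SCLPos V M.Dom} (h : Mirrors B p' q) (pl : Player) :
    posWin (substruct M B hB) p' pl ↔ posWin M q pl := by
  have hsat : atomSat (substruct M B hB) p'.asg q.form ↔ atomSat M q.asg q.form :=
    atomSat_substruct_iff (h.asg_eqOn.mono fun _ => Or.inl)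
  cases pl <;> simp only [posWin, hsat, h.form_eq, h.pol_eq]

theorem of_relevantVars_subset {φ ψ : SCLFormula V} {e e' : ℕ → Option (SCLFormula V)}
    {t : ℕ → B} {s : ℕ → M.Dom} {b b' : Bool} (h : Mirrors B ⟨φ, e, t, b⟩ ⟨φ, e, s, b⟩)
    (hsub : ψ.relevantVars e' ⊆ φ.relevantVars e) : Mirrors B ⟨ψ, e', t, b'⟩ ⟨ψ, e', s, b'⟩ :=
  ⟨rfl, rfl, rfl, h.asg_mem, h.asg_eqOn.mono hsub⟩

theorem update {φ ψ : SCLFormula V} {e : ℕ → Option (SCLFormula V)} {t : ℕ → B}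
    {s : ℕ → M.Dom} {b : Bool} {x : ℕ} (h : Mirrors B ⟨φ, e, t, b⟩ ⟨φ, e, s, b⟩)
    (hφ : φ.freeVars = ψ.freeVars \ {x}) (a : B) :
    Mirrors B ⟨ψ, e, Function.update t x a, b⟩ ⟨ψ, e, Function.update s x a, b⟩ := by
  refine ⟨rfl, rfl, rfl, fun y => ?_, ?_⟩
  · rcases eq_or_ne y x with rfl | hyx
    · simp
    · simpa [Function.update_of_ne hyx] using h.asg_mem y
  · rw [Function.comp_update]
    refine h.asg_eqOn.update (relevantVars_subset_insert ?_) _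
    rw [hφ]
    exact Finset.subset_insert_sdiff_singleton _ _

theorem forth {p' r' : SCLPos V B} {q : SCLPos V M.Dom} {m k : ℕ} (h : Mirrors B p' q)
    (hstep : BStep (substruct M B hB) (p', m) (r', k)) :
    ∃ r, BStep M (q, m) (r, k) ∧ Mirrors B r' r := by
  obtain ⟨f, e, t, b⟩ := p'
  obtain ⟨f', e', s, b'⟩ := q
  obtain ⟨rfl : f = f', rfl : e = e', rfl : b = b', -, -⟩ := id h
  cases hstep
  case exStep _ _ a | allStep _ _ a => exact ⟨_, by constructor, h.update rfl a⟩
  case labStep => exact ⟨_, .labStep _ _ _ _ _ _, h.of_relevantVars_subset relevantVars_lab⟩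
  case claimStep hχ =>
    exact ⟨_, .claimStep _ _ _ _ _ _ hχ, h.of_relevantVars_subset (relevantVars_claim hχ)⟩
  all_goals exact ⟨_, by constructor,
    h.of_relevantVars_subset (relevantVars_subset (by simp [freeVars]))⟩

theorem back {p' : SCLPos V B} {q r : SCLPos V M.Dom} {m k : ℕ} (h : Mirrors B p' q)
    (hstep : BStep M (q, m) (r, k)) (hr : ∀ x, r.asg x ∈ B) :
    ∃ r', BStep (substruct M B hB) (p', m) (r', k) ∧ Mirrors B r' r := by
  obtain ⟨f, e, t, b⟩ := p'
  obtain ⟨f', e', s, b'⟩ := q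
  obtain ⟨rfl : f = f', rfl : e = e', rfl : b = b', -, -⟩ := id h
  cases hstep
  case exStep x _ a | allStep x _ a =>
    have ha : a ∈ B := by simpa using hr x
    exact ⟨_, by constructor, h.update rfl ⟨a, ha⟩⟩
  case labStep => exact ⟨_, .labStep _ _ _ _ _ _, h.of_relevantVars_subset relevantVars_lab⟩
  case claimStep hχ =>
    exact ⟨_, .claimStep _ _ _ _ _ _ hχ, h.of_relevantVars_subset (relevantVars_claim hχ)⟩
  all_goals exact ⟨_, by constructor,
    h.of_relevantVars_subset (relevantVars_subset (by simp [freeVars]))⟩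

end Mirrors

theorem mirrors_initPos {φ : SCLFormula V} (hφ : φ.freeVars = ∅) {b₀ : M.Dom} (hb₀ : b₀ ∈ B)
    (s : ℕ → B) : Mirrors B (initPos φ s) (initPos φ fun _ => b₀) := by
  refine ⟨rfl, rfl, rfl, fun _ => hb₀, ?_⟩
  rintro x (hx | ⟨L, χ, hL, -⟩)
  · simp [initPos, hφ] at hx
  · simp [initPos] at hL

end Substructure

theorem BStep.exists_asg_mem {V : Vocab} {M : Struct.{u} V} {B : Set M.Dom} {b₀ : M.Dom}
    (hb₀ : b₀ ∈ B) {q r : SCLPos V M.Dom} {m k : ℕ} (hq : ∀ x, q.asg x ∈ B)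
    (h : BStep M (q, m) (r, k)) : ∃ r', BStep M (q, m) (r', k) ∧ ∀ x, r'.asg x ∈ B := by
  have hupdate (x : ℕ) : ∀ y, Function.update q.asg x b₀ y ∈ B := fun y => by
    rcases eq_or_ne y x with rfl | hyx
    · simpa using hb₀
    · simpa [Function.update_of_ne hyx] using hq y
  have h' := h
  cases h
  case exStep => exact ⟨_, .exStep _ _ _ _ _ _ b₀, hupdate _⟩
  case allStep => exact ⟨_, .allStep _ _ _ _ _ _ b₀, hupdate _⟩
  all_goals exact ⟨_, h', hq⟩

namespace GOPos

variable {V : Vocab} {D D' : Type u}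

def LiftPred (Q : SCLPos V D → Prop) : GOPos V D → Prop
  | .inner q _ => Q q
  | _ => True

def liftVal (f : SCLPos V D → Set D) : GOPos V D → Set D
  | .inner q _ => f q
  | _ => ∅

def LiftRel (R : SCLPos V D' → SCLPos V D → Prop) : GOPos V D' → GOPos V D → Prop
  | .start, .start => True
  | .mid n', .mid n => n' = n
  | .inner p' k', .inner q k => R p' q ∧ k' = k
  | _, _ => False

theorem liftVal_finite {f : SCLPos V D → Set D} (hf : ∀ q, (f q).Finite) (g : GOPos V D) :
    (liftVal f g).Finite := by
  cases g
  exacts [Set.finite_empty, Set.finite_empty, hf _]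

theorem countable_setOf_liftPred {Q : SCLPos V D → Prop} {f : SCLPos V D → Set D} {C : Set D}
    (h : {q | Q q ∧ f q ⊆ C}.Countable) :
    {g : GOPos V D | LiftPred Q g ∧ liftVal f g ⊆ C}.Countable := by
  refine (((Set.countable_singleton start).union (Set.countable_range mid)).union
    ((h.prod (Set.countable_univ (α := ℕ))).image fun qk => inner qk.1 qk.2)).mono ?_
  rintro (_ | n | ⟨q, k⟩) hg
  exacts [Or.inl (Or.inl rfl), Or.inl (Or.inr ⟨n, rfl⟩), Or.inr ⟨(q, k), ⟨hg, trivial⟩, rfl⟩]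

end GOPos

section CountableSubstructure

open GameArena SCLPos

variable {V : Vocab} {M : Struct.{u} V} (φ : SCLFormula V) (b₀ : M.Dom) {B : Set M.Dom}
  (hB : B.Nonempty)

theorem isBisimulation_gameU (hb₀ : b₀ ∈ B) :
    (gameU (substruct M B hB)).IsBisimulation
      ((gameU M).restrict fun q => q.Confined φ b₀ ∧ q.boundValues φ ⊆ B) .eloise
      fun p' q => Mirrors B p' q ∧ q.Confined φ b₀ where
  turn_eq h := h.1.posTurn_eq
  win h hwin := (h.1.posWin_iff .eloise).2 hwin
  forth := by
    rintro p' q r' ⟨h, hq⟩ hstep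
    obtain ⟨m, k, hstep⟩ := UStep.exists_bStep hstep
    obtain ⟨r, hr, h'⟩ := h.forth hstep
    exact ⟨r, ⟨hr.uStep, hq.bStep hr, boundValues_subset h'.asg_mem⟩, h', hq.bStep hr⟩
  back := by
    rintro p' q r ⟨h, -⟩ ⟨hstep, hr, hrB⟩
    obtain ⟨m, k, hstep⟩ := UStep.exists_bStep hstep
    obtain ⟨r', hr', h'⟩ := h.back hstep (hr.asg_mem hb₀ hrB)
    exact ⟨r', hr'.uStep, h', hr⟩

theorem isBisimulation_gameOmega (hφ : φ.freeVars = ∅) (hb₀ : b₀ ∈ B) (s : ℕ → B) :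
    (gameOmega (substruct M B hB) φ s).IsBisimulation
      ((gameOmega M φ fun _ => b₀).restrict fun g =>
        g.LiftPred (Confined φ b₀) ∧ g.liftVal (boundValues φ) ⊆ B) .eloise
      (GOPos.LiftRel fun p' q => Mirrors B p' q ∧ q.Confined φ b₀) where
  turn_eq {g' g} h := by
    cases g' <;> cases g <;> first | exact h.elim | rfl | exact h.1.1.posTurn_eq
  win {g' g} h hwin := by
    cases g' <;> cases g <;>
      first | exact h.elim | exact hwin.elim | exact (h.1.1.posWin_iff .eloise).2 hwin
  forth := by
    rintro g' g r' h hstep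
    cases hstep with
    | abelardPick n =>
      cases g <;>
        first | exact h.elim | exact ⟨.mid n, ⟨.abelardPick n, trivial, Set.empty_subset _⟩, rfl⟩
    | eloisePick n' n hn =>
      cases g with
      | mid n'' =>
        obtain rfl : n' = n'' := h
        exact ⟨.inner _ n, ⟨.eloisePick n' n hn, confined_initPos φ b₀,
          (boundValues_initPos φ b₀).trans (Set.singleton_subset_iff.2 hb₀)⟩,
          ⟨mirrors_initPos hφ hb₀ s, confined_initPos φ b₀⟩, rfl⟩
      | _ => exact h.elim
    | play p' r' m k hstep =>
      cases g with
      | inner q l =>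
        obtain ⟨⟨h, hq⟩, rfl⟩ := h
        obtain ⟨r, hr, h'⟩ := h.forth hstep
        exact ⟨.inner r k, ⟨.play _ _ _ _ hr, hq.bStep hr, boundValues_subset h'.asg_mem⟩,
          ⟨h', hq.bStep hr⟩, rfl⟩
      | _ => exact h.elim
  back := by
    rintro g' g r h ⟨hstep, hr⟩
    cases hstep with
    | abelardPick n =>
      cases g' <;> first | exact h.elim | exact ⟨.mid n, .abelardPick n, rfl⟩
    | eloisePick n' n hn =>
      cases g' with
      | mid n'' =>
        obtain rfl : n'' = n' := h
        exact ⟨.inner _ n, .eloisePick n'' n hn,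
          ⟨mirrors_initPos hφ hb₀ s, confined_initPos φ b₀⟩, rfl⟩
      | _ => exact h.elim
    | play q r m k hstep =>
      cases g' with
      | inner p' l =>
        obtain ⟨⟨h, -⟩, rfl⟩ := h
        obtain ⟨r', hr', h'⟩ := h.back hstep (hr.1.asg_mem hb₀ hr.2)
        exact ⟨.inner r' k, .play _ _ _ _ hr', ⟨h', hr.1⟩, rfl⟩
      | _ => exact h.elim

variable {φ b₀}

theorem UStep.exists_boundValues_subset (hb₀ : b₀ ∈ B) {q r : SCLPos V M.Dom}
    (hq : q.Confined φ b₀) (hqB : q.boundValues φ ⊆ B) (h : UStep M q r) :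
    ∃ r', UStep M q r' ∧ r'.boundValues φ ⊆ B := by
  obtain ⟨m, k, h⟩ := h.exists_bStep
  obtain ⟨r', hr', hr'B⟩ := h.exists_asg_mem hb₀ (hq.asg_mem hb₀ hqB)
  exact ⟨r', hr'.uStep, boundValues_subset hr'B⟩

theorem liftPred_confined_of_gameOmega ⦃g g' : GOPos V M.Dom⦄
    (h : (gameOmega M φ fun _ => b₀).edge g g') (hg : g.LiftPred (Confined φ b₀)) :
    g'.LiftPred (Confined φ b₀) := by
  rcases h with _ | _ | ⟨_, _, _, _, hstep⟩
  exacts [trivial, confined_initPos φ b₀, Confined.bStep (M := M) hg hstep]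

theorem exists_gameOmega_edge_liftVal_subset (hb₀ : b₀ ∈ B) {g : GOPos V M.Dom}
    (hg : g.LiftPred (Confined φ b₀)) (hgB : g.liftVal (boundValues φ) ⊆ B)
    (hmove : ∃ g', (gameOmega M φ fun _ => b₀).edge g g') :
    ∃ g', (gameOmega M φ fun _ => b₀).edge g g' ∧ g'.liftVal (boundValues φ) ⊆ B := by
  obtain ⟨_, hstep⟩ := hmove
  cases hstep with
  | abelardPick => exact ⟨.mid 0, .abelardPick 0, Set.empty_subset _⟩
  | eloisePick n' =>
    exact ⟨.inner _ n', .eloisePick n' n' le_rfl,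
      (boundValues_initPos φ b₀).trans (Set.singleton_subset_iff.2 hb₀)⟩
  | play _ r _ k hstep =>
    obtain ⟨r', hr', hr'B⟩ := hstep.exists_asg_mem hb₀ (hg.asg_mem hb₀ hgB)
    exact ⟨.inner r' k, .play _ _ _ _ hr', boundValues_subset hr'B⟩

theorem SCLTrue.exists_countable_substruct (hφ : φ.freeVars = ∅)
    (h : SCLTrue M (fun _ => b₀) φ) :
    ∃ (B : Set M.Dom) (hB : B.Nonempty), B.Countable ∧
      ∀ s : ℕ → ↥B, SCLTrue (substruct M B hB) s φ := by
  obtain ⟨σ, hσ⟩ := h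
  obtain ⟨B, hBc, hb₀, hσB⟩ := hσ.exists_countable_restrict (Confined φ b₀) (boundValues φ) b₀
    (confined_initPos φ b₀) (boundValues_initPos φ b₀) (fun _ _ hstep hp => hp.uStep hstep)
    (boundValues_finite φ) (fun _ hC => countable_setOf_confined hC)
    fun _ hb₀ _ hq hqB ⟨_, hstep⟩ => hstep.exists_boundValues_subset hb₀ hq hqB
  refine ⟨B, ⟨b₀, hb₀⟩, hBc, fun s => ?_⟩
  exact (isBisimulation_gameU φ b₀ _ hb₀).hasWinningStrategy
    ⟨mirrors_initPos hφ hb₀ s, confined_initPos φ b₀⟩ ⟨σ, hσB⟩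

theorem BndTrue.exists_countable_substruct (hφ : φ.freeVars = ∅)
    (h : BndTrue M (fun _ => b₀) φ) :
    ∃ (B : Set M.Dom) (hB : B.Nonempty), B.Countable ∧
      ∀ s : ℕ → ↥B, BndTrue (substruct M B hB) s φ := by
  obtain ⟨σ, hσ⟩ := h
  obtain ⟨B, hBc, hb₀, hσB⟩ := hσ.exists_countable_restrict (GOPos.LiftPred (Confined φ b₀))
    (GOPos.liftVal (boundValues φ)) b₀ trivial (Set.empty_subset _) liftPred_confined_of_gameOmega
    (GOPos.liftVal_finite (boundValues_finite φ))
    (fun _ hC => GOPos.countable_setOf_liftPred (countable_setOf_confined hC))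
    fun _ hb₀ _ => exists_gameOmega_edge_liftVal_subset hb₀
  refine ⟨B, ⟨b₀, hb₀⟩, hBc, fun s => ?_⟩
  exact (isBisimulation_gameOmega φ b₀ _ hφ hb₀ s).hasWinningStrategy (by trivial) ⟨σ, hσB⟩

end CountableSubstructure

/-- (Countable downward Löwenheim–Skolem for SCL and
BndSCL.)  If a sentence `φ` is true in `𝔄` under unbounded (resp. bounded)
semantics, then `𝔄` has a countable substructure in which `φ` is true under
unbounded (resp. bounded) semantics. -/
theorem countable_downward_lowenheim_skolem {V : Vocab} (φ : SCLFormula V)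
    (hφ : φ.freeVars = ∅) (M : Struct.{u} V) :
    ((∀ s : ℕ → M.Dom, SCLTrue M s φ) →
      ∃ (B : Set M.Dom) (hB : B.Nonempty), B.Countable ∧
        ∀ s : ℕ → ↥B, SCLTrue (substruct M B hB) s φ) ∧
    ((∀ s : ℕ → M.Dom, BndTrue M s φ) →
      ∃ (B : Set M.Dom) (hB : B.Nonempty), B.Countable ∧
        ∀ s : ℕ → ↥B, BndTrue (substruct M B hB) s φ) := by
  obtain ⟨b₀⟩ := M.dom_nonempty
  exact ⟨fun h => SCLTrue.exists_countable_substruct hφ (h fun _ => b₀),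
    fun h => BndTrue.exists_countable_substruct hφ (h fun _ => b₀)⟩
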